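/- arXiv:2408.14308 — 2 statements merged into one kernel-verified Lean document; each statement's English description precedes it below -/
import Mathlib

section
/- The function f : ℝ → (-∞,∞] defined by f(0) = 0, f(x) = x − 1/2 for 1/2 < x ≤ 1, and f(x) = ∞ otherwise, has a unique minimizer (x = 0), but its lower convex envelope attains its minimum at more than one point. -/
open scoped BigOperators
open Classical

noncomputable section

/-- Convexity for extended-real-valued functions (codomain `(-∞, ∞]` modeled by `EReal`). -/
def ConvexE {X : Type*} [AddCommGroup X] [Module ℝ X] (f : X → EReal) : Prop :=
  ∀ x y : X, ∀ a b : ℝ, 0 ≤ a → 0 ≤ b → a + b = 1 →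
    f (a • x + b • y) ≤ (a : EReal) * f x + (b : EReal) * f y

/-- `f` is convex at `x`: every finite convex combination of points of `dom f`
representing `x` gives value at least `f x`. -/
def IsConvexAt {X : Type*} [AddCommGroup X] [Module ℝ X] (f : X → EReal) (x : X) : Prop :=
  ∀ (m : ℕ) (w : Fin m → ℝ) (p : Fin m → X),
    (∀ k, 0 ≤ w k) → (∑ k, w k) = 1 → (∀ k, f (p k) ≠ ⊤) →
    (∑ k, w k • p k) = x → f x ≤ ∑ k, (w k : EReal) * f (p k)

/-- The lower convex envelope: pointwise supremum of all convex minorants. -/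
def lce {X : Type*} [AddCommGroup X] [Module ℝ X] (f : X → EReal) : X → EReal :=
  fun x => sSup {y | ∃ h : X → EReal, ConvexE h ∧ (∀ z, h z ≤ f z) ∧ h x = y}

/-- The explicit formula: infimum of `∑ λₖ f xₖ` over all finite convex combinations
of points of `dom f` representing `x` (infimum of the empty set is `∞`). -/
def lceFormula {X : Type*} [AddCommGroup X] [Module ℝ X] (f : X → EReal) : X → EReal :=
  fun x => sInf {r | ∃ (m : ℕ) (w : Fin m → ℝ) (p : Fin m → X),
    (∀ k, 0 ≤ w k) ∧ (∑ k, w k) = 1 ∧ (∀ k, f (p k) ≠ ⊤) ∧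
    (∑ k, w k • p k) = x ∧ (∑ k, (w k : EReal) * f (p k)) = r}

/-!
`0` is the unique zero of `f ≥ 0`. The envelope is still `≥ 0`, since the zero
function is a convex minorant, but at `1/2` it is `0` as well: writing `1/2` as a convex
combination of `0` and `1/2 + δ` bounds it by `δ / (1 + 2δ)` for every small `δ > 0`. The point
is that `f` is not lower semicontinuous at `1/2`.
-/

section LowerConvexEnvelope

variable {X : Type*} [AddCommGroup X] [Module ℝ X]

theorem convexE_const (c : ℝ) : ConvexE (fun _ : X => (c : EReal)) := by
  intro _ _ a b _ _ hab
  rw [← EReal.coe_mul, ← EReal.coe_mul, ← EReal.coe_add, ← add_mul, hab, one_mul]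

theorem le_lce {f h : X → EReal} (hh : ConvexE h) (hle : ∀ z, h z ≤ f z) (x : X) :
    h x ≤ lce f x :=
  le_sSup ⟨h, hh, hle, rfl⟩

theorem lce_nonneg {f : X → EReal} (hf : ∀ z, 0 ≤ f z) (x : X) : 0 ≤ lce f x := by
  simpa using le_lce (convexE_const 0) (by simpa using hf) x

theorem lce_le (f : X → EReal) (x : X) : lce f x ≤ f x :=
  sSup_le fun _ ⟨_, _, hle, hx⟩ => hx ▸ hle x

theorem lce_add_smul_le (f : X → EReal) (x y : X) {a b : ℝ} (ha : 0 ≤ a) (hb : 0 ≤ b)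
    (hab : a + b = 1) : lce f (a • x + b • y) ≤ (a : EReal) * f x + (b : EReal) * f y := by
  refine sSup_le fun _ ⟨h, hh, hle, hxy⟩ => hxy ▸ (hh x y a b ha hb hab).trans ?_
  exact add_le_add (mul_le_mul_of_nonneg_left (hle x) (EReal.coe_nonneg.mpr ha))
    (mul_le_mul_of_nonneg_left (hle y) (EReal.coe_nonneg.mpr hb))

end LowerConvexEnvelope

section Example

def jumpAtHalf : ℝ → EReal := fun x =>
  if x = 0 then (0 : EReal) else if 1/2 < x ∧ x ≤ 1 then ((x - 1/2 : ℝ) : EReal) else ⊤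

theorem jumpAtHalf_zero : jumpAtHalf 0 = 0 := by simp [jumpAtHalf]

theorem jumpAtHalf_pos {x : ℝ} (hx : x ≠ 0) : 0 < jumpAtHalf x := by
  rw [jumpAtHalf, if_neg hx]
  split_ifs with h
  · exact EReal.coe_pos.mpr (by linarith [h.1])
  · exact EReal.zero_lt_top

theorem jumpAtHalf_nonneg (x : ℝ) : 0 ≤ jumpAtHalf x := by
  rcases eq_or_ne x 0 with rfl | hx
  · exact jumpAtHalf_zero.ge
  · exact (jumpAtHalf_pos hx).le

theorem lce_jumpAtHalf_half_le_of_pos {δ : ℝ} (hδ : 0 < δ) (hδ' : δ ≤ 1/2) :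
    lce jumpAtHalf (1/2) ≤ δ := by
  set t : ℝ := 1 / (1 + 2 * δ)
  have ht : 0 < t := by positivity
  have ht1 : t ≤ 1 := div_le_one_of_le₀ (by linarith) (by linarith)
  have hcomb : t • (1/2 + δ) + (1 - t) • (0 : ℝ) = 1/2 := by
    simp only [t, smul_eq_mul, mul_zero, add_zero]
    field_simp
  have hval : jumpAtHalf (1/2 + δ) = δ := by
    rw [jumpAtHalf, if_neg (by linarith), if_pos ⟨by linarith, by linarith⟩, add_sub_cancel_left]
  have hle :=
    lce_add_smul_le jumpAtHalf (1/2 + δ) 0 ht.le (sub_nonneg.mpr ht1) (add_sub_cancel t 1)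
  rw [hcomb] at hle
  calc lce jumpAtHalf (1/2)
      ≤ (t : EReal) * jumpAtHalf (1/2 + δ) + ((1 - t : ℝ) : EReal) * jumpAtHalf 0 := hle
    _ = ((t * δ : ℝ) : EReal) := by
      rw [hval, jumpAtHalf_zero, mul_zero, add_zero, EReal.coe_mul]
    _ ≤ δ := EReal.coe_le_coe_iff.mpr (mul_le_of_le_one_left hδ.le ht1)

theorem lce_jumpAtHalf_half_le_zero : lce jumpAtHalf (1/2) ≤ 0 := by
  refine le_of_forall_gt_imp_ge_of_dense fun a ha => ?_
  obtain ⟨c, hc0, hca⟩ := EReal.lt_iff_exists_real_btwn.mp ha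
  have hc : 0 < min c (1/2) := lt_min (EReal.coe_pos.mp hc0) (by norm_num)
  calc lce jumpAtHalf (1/2) ≤ (min c (1/2) : ℝ) :=
        lce_jumpAtHalf_half_le_of_pos hc (min_le_right _ _)
    _ ≤ c := EReal.coe_le_coe_iff.mpr (min_le_left _ _)
    _ ≤ a := hca.le

end Example

theorem stmt_4 (f : ℝ → EReal)
    (hf : f = fun x => if x = 0 then (0 : EReal)
      else if 1/2 < x ∧ x ≤ 1 then ((x - 1/2 : ℝ) : EReal) else ⊤) :
    (∀ x, x ≠ 0 → f 0 < f x) ∧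
    (∃ x₁ x₂ : ℝ, x₁ ≠ x₂ ∧ (∀ y, lce f x₁ ≤ lce f y) ∧ (∀ y, lce f x₂ ≤ lce f y)) := by
  obtain rfl : f = jumpAtHalf := hf
  have hlce_zero : lce jumpAtHalf 0 ≤ 0 := (lce_le _ 0).trans jumpAtHalf_zero.le
  refine ⟨fun x hx => jumpAtHalf_zero ▸ jumpAtHalf_pos hx, 0, 1/2, by norm_num, ?_, ?_⟩
  · exact fun y => hlce_zero.trans (lce_nonneg jumpAtHalf_nonneg y)
  · exact fun y => lce_jumpAtHalf_half_le_zero.trans (lce_nonneg jumpAtHalf_nonneg y)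
end
end

section
/- Let f : ℝⁿ → (-∞,∞] be proper and lower semicontinuous with bounded effective domain, and fix x ∈ conv(dom(f)). Then the infimum defining the lower convex envelope f̆(x) = inf { Σ_{k=1}^{n+1} λ_k f(x_k) : Σ λ_k x_k = x, λ_k ≥ 0, Σ λ_k = 1, x_k ∈ dom(f) } is attained by some (λ, x₁,…,x_{n+1}). -/
/-! Let `c` be a real lower bound of `f` on the compact set `closure (dom f)`. For representations
`x = ∑ₖ wₖ pₖ` with all `pₖ ∈ dom f`, the objective `∑ₖ wₖ f(pₖ)` equals `c + ∑ₖ wₖ g(pₖ)` with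
`g = (f - c)⁺ : E → [0, ∞]` lower semicontinuous. By Carathéodory some representation with `n + 1`
points exists. Representations with points in `closure (dom f)` form a compact set, on which
`(w, p) ↦ ∑ₖ wₖ g(pₖ)` is lower semicontinuous and so attains a minimum. This minimum is finite, so
every point with positive weight lies in `dom f`; a point with zero weight can be moved into
`dom f` without changing anything. -/

open scoped BigOperators
open Classical

noncomputable section

open scoped ENNReal

def convexReprs {E : Type*} [AddCommGroup E] [Module ℝ E] (s : Set E) (x : E) (ι : Type*)
    [Fintype ι] : Set ((ι → ℝ) × (ι → E)) :=
  {q | (∀ k, 0 ≤ q.1 k) ∧ (∑ k, q.1 k) = 1 ∧ (∀ k, q.2 k ∈ s) ∧ (∑ k, q.1 k • q.2 k) = x}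

def weightedSum {E ι : Type*} [Fintype ι] (g : E → ℝ≥0∞) (q : (ι → ℝ) × (ι → E)) : ℝ≥0∞ :=
  ∑ k, ENNReal.ofReal (q.1 k) * g (q.2 k)

section ConvexReprs

variable {E : Type*} [AddCommGroup E] [Module ℝ E] {s t : Set E} {x : E}
  {ι : Type*} [Fintype ι]

theorem convexReprs_mono (hst : s ⊆ t) : convexReprs s x ι ⊆ convexReprs t x ι :=
  fun _ ⟨hw, hw1, hp, hx⟩ => ⟨hw, hw1, fun k => hst (hp k), hx⟩

theorem convexReprs_nonempty_of_card_le {κ : Type*} [Fintype κ]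
    (hcard : Fintype.card ι ≤ Fintype.card κ) (hs : s.Nonempty)
    (h : (convexReprs s x ι).Nonempty) : (convexReprs s x κ).Nonempty := by
  obtain ⟨y₀, hy₀⟩ := hs
  obtain ⟨⟨w, p⟩, hw, hw1, hp, hx⟩ := h
  let e : κ ≃ ι ⊕ Fin (Fintype.card κ - Fintype.card ι) :=
    Fintype.equivOfCardEq (by simp only [Fintype.card_sum, Fintype.card_fin]; omega)
  refine ⟨(Sum.elim w 0 ∘ e, Sum.elim p (fun _ => y₀) ∘ e), fun k => ?_, ?_, fun k => ?_, ?_⟩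
  · show 0 ≤ Sum.elim w 0 (e k)
    rcases e k with i | j
    exacts [hw i, le_rfl]
  · show ∑ k, Sum.elim w 0 (e k) = 1
    simpa [e.sum_comp (Sum.elim w 0), Fintype.sum_sum_type] using hw1
  · show Sum.elim p (fun _ => y₀) (e k) ∈ s
    rcases e k with i | j
    exacts [hp i, hy₀]
  · show ∑ k, Sum.elim w 0 (e k) • Sum.elim p (fun _ => y₀) (e k) = x
    simpa [e.sum_comp (fun i => Sum.elim w 0 i • Sum.elim p (fun _ => y₀) i),
      Fintype.sum_sum_type] using hx

theorem convexReprs_fin_succ_nonempty_of_mem_convexHull [FiniteDimensional ℝ E] {n : ℕ}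
    (hn : Module.finrank ℝ E ≤ n) (hx : x ∈ convexHull ℝ s) :
    (convexReprs s x (Fin (n + 1))).Nonempty := by
  obtain ⟨ι, _, z, v, hzs, hz, hv, hv1, hvx⟩ := eq_pos_convex_span_of_mem_convexHull hx
  have hcard : Fintype.card ι ≤ Fintype.card (Fin (n + 1)) := by
    have := (Submodule.finrank_le (vectorSpan ℝ (Set.range z))).trans hn
    have := hz.card_le_finrank_succ
    simp only [Fintype.card_fin]
    omega
  exact convexReprs_nonempty_of_card_le hcard (convexHull_nonempty_iff.1 ⟨x, hx⟩)
    ⟨(v, z), fun k => (hv k).le, hv1, fun k => hzs ⟨k, rfl⟩, hvx⟩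

variable [TopologicalSpace E] [ContinuousAdd E] [ContinuousSMul ℝ E] [T2Space E]

theorem isClosed_convexReprs (hs : IsClosed s) : IsClosed (convexReprs s x ι) := by
  have hw : ∀ k, Continuous fun q : (ι → ℝ) × (ι → E) => q.1 k :=
    fun k => (continuous_apply k).comp continuous_fst
  have hp : ∀ k, Continuous fun q : (ι → ℝ) × (ι → E) => q.2 k :=
    fun k => (continuous_apply k).comp continuous_snd
  simp only [convexReprs, Set.ofPred_and, Set.ofPred_forall]
  refine (isClosed_iInter fun k => isClosed_le continuous_const (hw k)).inter <|
    (isClosed_eq (continuous_finsetSum _ fun k _ => hw k) continuous_const).inter <|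
    (isClosed_iInter fun k => hs.preimage (hp k)).inter <|
    isClosed_eq (continuous_finsetSum _ fun k _ => (hw k).smul (hp k)) continuous_const

theorem isCompact_convexReprs (hs : IsCompact s) : IsCompact (convexReprs s x ι) := by
  refine ((isCompact_univ_pi fun _ => isCompact_Icc (a := (0 : ℝ)) (b := 1)).prod
    (isCompact_univ_pi fun _ => hs)).of_isClosed_subset (isClosed_convexReprs hs.isClosed) ?_
  rintro ⟨w, p⟩ ⟨hw, hw1, hp, -⟩
  refine ⟨fun k _ => ⟨hw k, ?_⟩, fun k _ => hp k⟩
  exact hw1 ▸ Finset.single_le_sum (fun j _ => hw j) (Finset.mem_univ k)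

end ConvexReprs

section Semicontinuity

variable {α : Type*} [TopologicalSpace α]

theorem LowerSemicontinuous.ennreal_mul {f g : α → ℝ≥0∞} (hf : LowerSemicontinuous f)
    (hg : LowerSemicontinuous g) : LowerSemicontinuous fun z => f z * g z := by
  intro z b hb
  obtain ⟨a, ha, c, hc, hbac⟩ : ∃ a < f z, ∃ c < g z, b < a * c := by
    by_contra! h
    exact hb.not_ge (ENNReal.mul_le_of_forall_lt h)
  filter_upwards [hf z a ha, hg z c hc] with y hay hcy
  exact hbac.trans_le (mul_le_mul' hay.le hcy.le)

theorem IsCompact.exists_forall_coe_le_of_lowerSemicontinuousOn {K : Set α} (hK : IsCompact K)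
    {f : α → EReal} (hf : LowerSemicontinuousOn f K) (hbot : ∀ y ∈ K, f y ≠ ⊥) :
    ∃ c : ℝ, ∀ y ∈ K, (c : EReal) ≤ f y := by
  rcases K.eq_empty_or_nonempty with rfl | hne
  · exact ⟨0, by simp⟩
  obtain ⟨a, ha, hmin⟩ := hf.exists_isMinOn hne hK
  obtain ⟨c, -, hc⟩ := EReal.lt_iff_exists_real_btwn.1 (bot_lt_iff_ne_bot.2 (hbot a ha))
  exact ⟨c, fun y hy => hc.le.trans (hmin hy)⟩

theorem LowerSemicontinuous.toENNReal_sub_coe {f : α → EReal} (hf : LowerSemicontinuous f)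
    (c : ℝ) : LowerSemicontinuous fun y => (f y - c).toENNReal := by
  have hsub : Continuous fun t : EReal => t - c := by
    refine continuous_iff_continuousAt.2 fun t => ?_
    exact (EReal.continuousAt_add (Or.inr (EReal.coe_ne_bot _)) (Or.inr (EReal.coe_ne_top _))).comp
      (continuous_id.prodMk continuous_const).continuousAt
  exact (EReal.continuous_toENNReal.comp hsub).comp_lowerSemicontinuous hf
    fun s t hst => EReal.toENNReal_le_toENNReal (EReal.sub_le_sub hst le_rfl)

theorem lowerSemicontinuous_weightedSum {E ι : Type*} [TopologicalSpace E] [Fintype ι]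
    {g : E → ℝ≥0∞} (hg : LowerSemicontinuous g) :
    LowerSemicontinuous (weightedSum g : (ι → ℝ) × (ι → E) → ℝ≥0∞) :=
  lowerSemicontinuous_sum fun k _ =>
    (ENNReal.continuous_ofReal.comp ((continuous_apply k).comp continuous_fst)).lowerSemicontinuous
      |>.ennreal_mul (hg.comp ((continuous_apply k).comp continuous_snd))

end Semicontinuity

theorem EReal.coe_finsetSum {ι : Type*} (s : Finset ι) (g : ι → ℝ) :
    ((∑ i ∈ s, g i : ℝ) : EReal) = ∑ i ∈ s, (g i : EReal) :=
  map_sum (⟨⟨Real.toEReal, EReal.coe_zero⟩, EReal.coe_add⟩ : ℝ →+ EReal) g s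

theorem EReal.sub_coe_ne_top_iff (a : EReal) (c : ℝ) : a - c ≠ ⊤ ↔ a ≠ ⊤ := by
  induction a using EReal.rec <;> simp [← EReal.coe_sub]

section WeightedSum

variable {E ι : Type*} [Fintype ι]

theorem weightedSum_ne_top {g : E → ℝ≥0∞} {q : (ι → ℝ) × (ι → E)} (hq : ∀ k, g (q.2 k) ≠ ⊤) :
    weightedSum g q ≠ ⊤ :=
  ENNReal.sum_ne_top.2 fun k _ => ENNReal.mul_ne_top ENNReal.ofReal_ne_top (hq k)

theorem exists_mem_convexReprs_weightedSum_eq [AddCommGroup E] [Module ℝ E] {g : E → ℝ≥0∞}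
    {s : Set E} {x y₀ : E} (hy₀ : g y₀ ≠ ⊤) {q : (ι → ℝ) × (ι → E)} (hq : q ∈ convexReprs s x ι)
    (hfin : weightedSum g q ≠ ⊤) :
    ∃ q' ∈ convexReprs {y | g y ≠ ⊤} x ι, weightedSum g q' = weightedSum g q := by
  obtain ⟨w, p⟩ := q
  obtain ⟨hw, hw1, -, hx⟩ := hq
  refine ⟨(w, fun k => if w k = 0 then y₀ else p k), ⟨hw, hw1, fun k => ?_, ?_⟩, ?_⟩
  · dsimp only
    split_ifs with h
    · exact hy₀
    intro htop
    apply ENNReal.sum_ne_top.1 hfin k (Finset.mem_univ k)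
    rw [htop, ENNReal.mul_top (ENNReal.ofReal_pos.2 ((hw k).lt_of_ne' h)).ne']
  · rw [← hx]
    refine Finset.sum_congr rfl fun k _ => ?_
    dsimp only
    split_ifs with h <;> simp [h]
  · refine Finset.sum_congr rfl fun k _ => ?_
    dsimp only
    split_ifs with h <;> simp [h]

theorem sum_coe_mul_eq_coe_add_weightedSum {f : E → EReal} (c : ℝ) {w : ι → ℝ} {p : ι → E}
    (hw : ∀ k, 0 ≤ w k) (hw1 : ∑ k, w k = 1) (htop : ∀ k, f (p k) ≠ ⊤)
    (hc : ∀ k, (c : EReal) ≤ f (p k)) :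
    ∑ k, (w k : EReal) * f (p k) = c + weightedSum (fun y => (f y - c).toENNReal) (w, p) := by
  obtain ⟨r, hr⟩ : ∃ r : ι → ℝ, ∀ k, f (p k) = r k :=
    ⟨fun k => (f (p k)).toReal, fun k =>
      (EReal.coe_toReal (htop k) (ne_bot_of_le_ne_bot (EReal.coe_ne_bot c) (hc k))).symm⟩
  have hcr : ∀ k, 0 ≤ w k * (r k - c) := fun k =>
    mul_nonneg (hw k) (sub_nonneg.2 (EReal.coe_le_coe_iff.1 (hr k ▸ hc k)))
  simp only [weightedSum, hr, ← EReal.coe_sub, EReal.real_coe_toENNReal,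
    ← ENNReal.ofReal_mul (hw _), ← EReal.coe_mul]
  rw [← ENNReal.ofReal_sum_of_nonneg fun k _ => hcr k, EReal.coe_ennreal_ofReal,
    max_eq_left (Finset.sum_nonneg fun k _ => hcr k), ← EReal.coe_finsetSum, ← EReal.coe_add]
  congr 1
  simp only [mul_sub, Finset.sum_sub_distrib, ← Finset.sum_mul, hw1]
  ring

end WeightedSum

theorem stmt_16 {n : ℕ} (f : EuclideanSpace ℝ (Fin n) → EReal)
    (hbot : ∀ x, f x ≠ ⊥) (hproper : ∃ x, f x ≠ ⊤)
    (hlsc : LowerSemicontinuous f) (hbdd : Bornology.IsBounded {x | f x ≠ ⊤})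
    (x : EuclideanSpace ℝ (Fin n)) (hx : x ∈ convexHull ℝ {y | f y ≠ ⊤}) :
    ∃ (w : Fin (n + 1) → ℝ) (p : Fin (n + 1) → EuclideanSpace ℝ (Fin n)),
      (∀ k, 0 ≤ w k) ∧ (∑ k, w k) = 1 ∧ (∀ k, f (p k) ≠ ⊤) ∧
      (∑ k, w k • p k) = x ∧
      ∀ (w' : Fin (n + 1) → ℝ) (p' : Fin (n + 1) → EuclideanSpace ℝ (Fin n)),
        (∀ k, 0 ≤ w' k) → (∑ k, w' k) = 1 → (∀ k, f (p' k) ≠ ⊤) →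
        (∑ k, w' k • p' k) = x →
        (∑ k, (w k : EReal) * f (p k)) ≤ ∑ k, (w' k : EReal) * f (p' k) := by
  obtain ⟨x₀, hx₀⟩ := hproper
  set D := {y | f y ≠ ⊤}
  have hK : IsCompact (closure D) := hbdd.isCompact_closure
  obtain ⟨c, hc⟩ := hK.exists_forall_coe_le_of_lowerSemicontinuousOn (hlsc.lowerSemicontinuousOn _)
    fun y _ => hbot y
  set g := fun y => (f y - c).toENNReal
  have hgtop : ∀ y, g y ≠ ⊤ ↔ f y ≠ ⊤ := fun y => by simp [g, EReal.sub_coe_ne_top_iff]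
  obtain ⟨q₀, hq₀⟩ := convexReprs_fin_succ_nonempty_of_mem_convexHull
    finrank_euclideanSpace_fin.le hx
  have hq₀K := convexReprs_mono subset_closure hq₀
  have hobj := (lowerSemicontinuous_weightedSum (hlsc.toENNReal_sub_coe c)).lowerSemicontinuousOn
    (convexReprs (closure D) x (Fin (n + 1)))
  obtain ⟨q, hqK, hqmin⟩ := hobj.exists_isMinOn ⟨q₀, hq₀K⟩ (isCompact_convexReprs hK)
  have hfin : weightedSum g q ≠ ⊤ :=
    ne_top_of_le_ne_top (weightedSum_ne_top fun k => (hgtop _).2 (hq₀.2.2.1 k)) (hqmin hq₀K)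
  obtain ⟨⟨w, p⟩, hq', hq'q⟩ := exists_mem_convexReprs_weightedSum_eq ((hgtop x₀).2 hx₀) hqK hfin
  obtain ⟨hw, hw1, hp, hpx⟩ := convexReprs_mono (fun y => (hgtop y).1) hq'
  refine ⟨w, p, hw, hw1, hp, hpx, fun w' p' hw' hw1' hp' hpx' => ?_⟩
  rw [sum_coe_mul_eq_coe_add_weightedSum c hw hw1 hp fun k => hc _ (subset_closure (hp k)),
    sum_coe_mul_eq_coe_add_weightedSum c hw' hw1' hp' fun k => hc _ (subset_closure (hp' k))]
  have hq'D : (w', p') ∈ convexReprs D x _ := ⟨hw', hw1', hp', hpx'⟩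
  have hmin : weightedSum g (w, p) ≤ weightedSum g (w', p') :=
    hq'q ▸ hqmin (convexReprs_mono subset_closure hq'D)
  exact add_le_add_right (EReal.coe_ennreal_le_coe_ennreal_iff.2 hmin) _
end
end
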